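/- arXiv:2007.12040 — 4 statements merged into one kernel-verified Lean document; each statement's English description precedes it below -/
import Mathlib

section
/- For every ε ∈ (1/2, 1), the probability of being at the origin after 2n steps in the Gillis random walk converges: lim_{n→∞} P_{2n} = 2 − 1/ε. -/
/-!
The Gillis walk is reversible: `μ j = ν |j|` with `ν (k + 1) = ν k R k / L (k + 1)` satisfies
detailed balance `μ j R j = μ (j + 1) L (j + 1)`. For any reversible nearest-neighbour walk the
density `g n = P n / μ` evolves by averaging, `g (n + 1) j = L j g n (j - 1) + R j g n (j + 1)`,
so the energy `∑ μ g n ²` decreases by exactly the Dirichlet form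
`∑ μ R L (g n (j + 1) - g n (j - 1))²`. The energy is bounded below, so the Dirichlet form tends
to zero and `g (2m)` becomes flat on every finite set of even sites. Since `P ≤ μ`, a finite total
mass `T = ∑ μ` makes the walk tight on the even sites, and mass one forces
`P (2m) 0 → μ 0 / μ(2ℤ) = 2 / T` (the two parity classes carry equal mass, both being the sum of
the edge fluxes `μ j R j`).

For Gillis the flux `φ k = ν k R k` satisfies `(k + 1 + ε) φ (k + 1) = (k + 1 - ε) φ k`, so
`φ k = C k - C (k + 1)` for `C k = (k + ε) φ k / (2ε - 1)`. When `ε > 1/2` this gives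
`∑ φ = C 0 = ε / (2 (2ε - 1))` (the remainder `C k ~ k φ k` must vanish since `∑ φ < ∞`), hence
`T = 2ε / (2ε - 1)` and the limit `2 / T = 2 - 1/ε`.
-/

open Filter

/-- Probability of a right step in the Gillis walk. -/
noncomputable def gR (ε : ℝ) (j : ℤ) : ℝ :=
  if j = 0 then 1 / 2 else (1 - ε / (j : ℝ)) / 2

/-- Probability of a left step in the Gillis walk. -/
noncomputable def gL (ε : ℝ) (j : ℤ) : ℝ :=
  if j = 0 then 1 / 2 else (1 + ε / (j : ℝ)) / 2

/-- Occupation probabilities of the Gillis walk started at the origin. -/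
noncomputable def gP (ε : ℝ) : ℕ → ℤ → ℝ
  | 0, j => if j = 0 then 1 else 0
  | n + 1, j => gR ε (j - 1) * gP ε n (j - 1) + gL ε (j + 1) * gP ε n (j + 1)

open Topology

lemma HasSum.int_even_add_odd {M : Type*} [AddCommMonoid M] [TopologicalSpace M] [ContinuousAdd M]
    {f : ℤ → M} {a b : M} (he : HasSum (fun i => f (2 * i)) a)
    (ho : HasSum (fun i => f (2 * i + 1)) b) : HasSum f (a + b) := by
  have hinj : Function.Injective fun i : ℤ => 2 * i := mul_right_injective₀ two_ne_zero
  refine (hinj.hasSum_range_iff.2 he).add_isCompl ?_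
    (((add_left_injective 1).comp hinj).hasSum_range_iff.2 ho)
  simpa [Function.comp_def] using Int.isCompl_even_odd

lemma tendsto_of_eventually_forall_lt_lt {ι : Type*} {F : Filter ι} [F.NeBot] {x : ℕ → ℝ}
    {lo hi : ι → ℝ} {a : ℝ} (hlo : Tendsto lo F (𝓝 a)) (hhi : Tendsto hi F (𝓝 a))
    (h : ∀ᶠ k in F, ∀ η > 0, ∀ᶠ m in atTop, lo k - η < x m ∧ x m < hi k + η) :
    Tendsto x atTop (𝓝 a) := by
  refine tendsto_order.2 ⟨fun b hb => ?_, fun b hb => ?_⟩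
  · obtain ⟨k, hk, hklo⟩ :=
      (h.and (hlo.eventually (eventually_gt_nhds (by linarith : (a + b) / 2 < a)))).exists
    filter_upwards [hk ((a - b) / 2) (by linarith)] with m hm
    linarith [hm.1]
  · obtain ⟨k, hk, hkhi⟩ :=
      (h.and (hhi.eventually (eventually_lt_nhds (by linarith : a < (a + b) / 2)))).exists
    filter_upwards [hk ((b - a) / 2) (by linarith)] with m hm
    linarith [hm.2]

lemma Summable.eq_zero_of_tendsto_natCast_mul {f : ℕ → ℝ} (hf : Summable f) {l : ℝ}
    (h : Tendsto (fun n => n * f n) atTop (𝓝 l)) : l = 0 := by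
  by_contra hl
  have hbig : (fun n : ℕ => 1 / (n : ℝ)) =O[atTop] f := by
    refine Asymptotics.IsBigO.of_bound (2 / |l|) ?_
    filter_upwards [h.abs.eventually (eventually_gt_nhds (half_lt_self (abs_pos.2 hl))),
      eventually_gt_atTop 0] with n hn hn0
    have hn0' : (0 : ℝ) < n := Nat.cast_pos.2 hn0
    rw [abs_mul, Nat.abs_cast] at hn
    rw [Real.norm_eq_abs, Real.norm_eq_abs, abs_of_pos (one_div_pos.2 hn0'),
      div_mul_eq_mul_div, le_div_iff₀ (abs_pos.2 hl), div_mul_eq_mul_div, div_le_iff₀ hn0']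
    linarith
  exact Real.not_summable_one_div_natCast (summable_of_isBigO_nat hf hbig)

namespace BirthDeath

variable {R L μ : ℤ → ℝ}

def occupation (R L : ℤ → ℝ) : ℕ → ℤ → ℝ
  | 0, j => if j = 0 then 1 else 0
  | n + 1, j => R (j - 1) * occupation R L n (j - 1) + L (j + 1) * occupation R L n (j + 1)

lemma occupation_eq_zero_of_odd {n : ℕ} {j : ℤ} (h : Odd (j + n)) : occupation R L n j = 0 := by
  induction n generalizing j with
  | zero => simp_all [occupation, Int.odd_iff]; omega
  | succ n ih =>
    rw [Int.odd_iff] at h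
    rw [occupation, ih (by rw [Int.odd_iff]; push_cast at h; omega),
      ih (by rw [Int.odd_iff]; push_cast at h; omega)]
    ring

lemma occupation_nonneg (hR : ∀ j, 0 ≤ R j) (hL : ∀ j, 0 ≤ L j) (n : ℕ) (j : ℤ) :
    0 ≤ occupation R L n j := by
  induction n generalizing j with
  | zero => unfold occupation; positivity
  | succ n ih =>
    rw [occupation]
    exact add_nonneg (mul_nonneg (hR _) (ih _)) (mul_nonneg (hL _) (ih _))

lemma hasSum_occupation (hR : ∀ j, 0 ≤ R j) (hL : ∀ j, 0 ≤ L j) (hRL : ∀ j, R j + L j = 1)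
    (n : ℕ) : HasSum (occupation R L n) 1 := by
  induction n with
  | zero => simpa [occupation] using hasSum_ite_eq (0 : ℤ) (1 : ℝ)
  | succ n ih =>
    have hP := occupation_nonneg hR hL n
    have hRs : Summable fun j => R j * occupation R L n j :=
      ih.summable.of_nonneg_of_le (fun j => mul_nonneg (hR j) (hP j))
        fun j => mul_le_of_le_one_left (hP j) (by linarith [hL j, hRL j])
    have hLs : Summable fun j => L j * occupation R L n j :=
      ih.summable.of_nonneg_of_le (fun j => mul_nonneg (hL j) (hP j))
        fun j => mul_le_of_le_one_left (hP j) (by linarith [hR j, hRL j])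
    have hsum : ∑' j, R j * occupation R L n j + ∑' j, L j * occupation R L n j = 1 := by
      rw [← hRs.tsum_add hLs, ← ih.tsum_eq]
      simp_rw [← add_mul, hRL, one_mul]
    have hshift := ((Equiv.subRight (1 : ℤ)).hasSum_iff.mpr hRs.hasSum).add
      ((Equiv.addRight (1 : ℤ)).hasSum_iff.mpr hLs.hasSum)
    rw [hsum] at hshift
    exact hshift

structure IsReversible (R L μ : ℤ → ℝ) : Prop where
  right_pos : ∀ j, 0 < R j
  left_pos : ∀ j, 0 < L j
  right_add_left : ∀ j, R j + L j = 1
  measure_pos : ∀ j, 0 < μ j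
  balance : ∀ j, μ j * R j = μ (j + 1) * L (j + 1)

noncomputable def density (R L μ : ℤ → ℝ) (n : ℕ) (j : ℤ) : ℝ := occupation R L n j / μ j

noncomputable def energy (R L μ : ℤ → ℝ) (n : ℕ) : ℝ := ∑' j, μ j * density R L μ n j ^ 2

namespace IsReversible

variable (h : IsReversible R L μ)
include h

lemma right_le_one (j : ℤ) : R j ≤ 1 := by linarith [h.left_pos j, h.right_add_left j]

lemma left_le_one (j : ℤ) : L j ≤ 1 := by linarith [h.right_pos j, h.right_add_left j]

lemma mul_right_mul_left_pos (j : ℤ) : 0 < μ j * R j * L j :=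
  mul_pos (mul_pos (h.measure_pos j) (h.right_pos j)) (h.left_pos j)

lemma balance_sub_one (j : ℤ) : μ j * L j = μ (j - 1) * R (j - 1) := by
  simpa using (h.balance (j - 1)).symm

lemma occupation_nonneg (n : ℕ) (j : ℤ) : 0 ≤ occupation R L n j :=
  BirthDeath.occupation_nonneg (fun j => (h.right_pos j).le) (fun j => (h.left_pos j).le) n j

lemma hasSum_occupation (n : ℕ) : HasSum (occupation R L n) 1 :=
  BirthDeath.hasSum_occupation (fun j => (h.right_pos j).le) (fun j => (h.left_pos j).le)
    h.right_add_left n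

lemma mul_density (n : ℕ) (j : ℤ) : μ j * density R L μ n j = occupation R L n j :=
  mul_div_cancel₀ _ (h.measure_pos j).ne'

lemma density_succ (n : ℕ) (j : ℤ) :
    density R L μ (n + 1) j = L j * density R L μ n (j - 1) + R j * density R L μ n (j + 1) := by
  rw [density, div_eq_iff (h.measure_pos j).ne', occupation, ← h.mul_density n (j - 1),
    ← h.mul_density n (j + 1)]
  linear_combination -density R L μ n (j - 1) * h.balance_sub_one j -
    density R L μ n (j + 1) * h.balance j

lemma density_le_one (hμ0 : μ 0 = 1) (n : ℕ) (j : ℤ) : density R L μ n j ≤ 1 := by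
  induction n generalizing j with
  | zero =>
    rw [density, occupation]
    split_ifs with hj
    · simp [hj, hμ0]
    · simp
  | succ n ih =>
    rw [h.density_succ]
    nlinarith [ih (j - 1), ih (j + 1), h.right_pos j, h.left_pos j, h.right_add_left j]

lemma occupation_le (hμ0 : μ 0 = 1) (n : ℕ) (j : ℤ) : occupation R L n j ≤ μ j := by
  rw [← h.mul_density]
  exact mul_le_of_le_one_right (h.measure_pos j).le (h.density_le_one hμ0 n j)

lemma summable_energy (hμ0 : μ 0 = 1) (n : ℕ) :
    Summable fun j => μ j * density R L μ n j ^ 2 := by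
  refine (h.hasSum_occupation n).summable.of_nonneg_of_le
    (fun j => mul_nonneg (h.measure_pos j).le (sq_nonneg _)) fun j => ?_
  rw [sq, ← mul_assoc, h.mul_density]
  exact mul_le_of_le_one_right (h.occupation_nonneg n j) (h.density_le_one hμ0 n j)

lemma summable_energy_mul (hμ0 : μ 0 = 1) {c : ℤ → ℝ} (hc₀ : ∀ j, 0 ≤ c j) (hc₁ : ∀ j, c j ≤ 1)
    (n : ℕ) : Summable fun j => μ j * c j * density R L μ n j ^ 2 :=
  (h.summable_energy hμ0 n).of_nonneg_of_le
    (fun j => mul_nonneg (mul_nonneg (h.measure_pos j).le (hc₀ j)) (sq_nonneg _))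
    fun j => by
      rw [mul_right_comm]
      exact mul_le_of_le_one_right (mul_nonneg (h.measure_pos j).le (sq_nonneg _)) (hc₁ j)

lemma mul_density_succ_sq_add (n : ℕ) (j : ℤ) :
    μ j * density R L μ (n + 1) j ^ 2 +
        μ j * R j * L j * (density R L μ n (j + 1) - density R L μ n (j - 1)) ^ 2 =
      μ (j - 1) * R (j - 1) * density R L μ n (j - 1) ^ 2 +
        μ (j + 1) * L (j + 1) * density R L μ n (j + 1) ^ 2 := by
  rw [h.density_succ, ← h.balance_sub_one, ← h.balance]
  linear_combination (μ j * (L j * density R L μ n (j - 1) ^ 2 +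
    R j * density R L μ n (j + 1) ^ 2)) * h.right_add_left j

lemma hasSum_dissipation (hμ0 : μ 0 = 1) (n : ℕ) :
    HasSum (fun j => μ j * R j * L j * (density R L μ n (j + 1) - density R L μ n (j - 1)) ^ 2)
      (energy R L μ n - energy R L μ (n + 1)) := by
  have hRs := h.summable_energy_mul hμ0 (fun j => (h.right_pos j).le) h.right_le_one n
  have hLs := h.summable_energy_mul hμ0 (fun j => (h.left_pos j).le) h.left_le_one n
  have hsum : ∑' j, μ j * R j * density R L μ n j ^ 2 +
      ∑' j, μ j * L j * density R L μ n j ^ 2 = energy R L μ n := by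
    rw [← hRs.tsum_add hLs, energy]
    congr 1 with j
    linear_combination μ j * density R L μ n j ^ 2 * h.right_add_left j
  have hshift := ((Equiv.subRight (1 : ℤ)).hasSum_iff.mpr hRs.hasSum).add
    ((Equiv.addRight (1 : ℤ)).hasSum_iff.mpr hLs.hasSum)
  rw [hsum] at hshift
  have hfun : (fun j => μ j * R j * L j *
      (density R L μ n (j + 1) - density R L μ n (j - 1)) ^ 2) = fun j =>
      (μ (j - 1) * R (j - 1) * density R L μ n (j - 1) ^ 2 +
        μ (j + 1) * L (j + 1) * density R L μ n (j + 1) ^ 2) -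
      μ j * density R L μ (n + 1) j ^ 2 := by
    funext j
    linarith [h.mul_density_succ_sq_add n j]
  rw [hfun]
  exact hshift.sub (h.summable_energy hμ0 (n + 1)).hasSum

lemma tendsto_energy_sub (hμ0 : μ 0 = 1) :
    Tendsto (fun n => energy R L μ n - energy R L μ (n + 1)) atTop (𝓝 0) := by
  have hanti : Antitone (energy R L μ) := antitone_nat_of_succ_le fun n =>
    sub_nonneg.mp <| (h.hasSum_dissipation hμ0 n).nonneg fun j =>
      mul_nonneg (h.mul_right_mul_left_pos j).le (sq_nonneg _)
  have hbdd : BddBelow (Set.range (energy R L μ)) := ⟨0, by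
    rintro _ ⟨n, rfl⟩
    exact tsum_nonneg fun j => mul_nonneg (h.measure_pos j).le (sq_nonneg _)⟩
  have hlim := tendsto_atTop_ciInf hanti hbdd
  simpa using hlim.sub (hlim.comp (tendsto_add_atTop_nat 1))

lemma tendsto_density_sub (hμ0 : μ 0 = 1) (j : ℤ) :
    Tendsto (fun n => density R L μ n (j + 1) - density R L μ n (j - 1)) atTop (𝓝 0) := by
  have hc := h.mul_right_mul_left_pos j
  have hsq : Tendsto (fun n => (density R L μ n (j + 1) - density R L μ n (j - 1)) ^ 2)
      atTop (𝓝 0) := by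
    have hterm : Tendsto (fun n => μ j * R j * L j *
        (density R L μ n (j + 1) - density R L μ n (j - 1)) ^ 2) atTop (𝓝 0) :=
      squeeze_zero (fun n => by positivity)
        (fun n => le_hasSum (h.hasSum_dissipation hμ0 n) j fun i _ =>
          mul_nonneg (h.mul_right_mul_left_pos i).le (sq_nonneg _))
        (h.tendsto_energy_sub hμ0)
    have := hterm.const_mul (μ j * R j * L j)⁻¹
    rw [mul_zero] at this
    exact this.congr fun n => inv_mul_cancel_left₀ hc.ne' _
  rw [tendsto_zero_iff_abs_tendsto_zero]
  simpa [Function.comp_def, Real.sqrt_sq_eq_abs] using hsq.sqrt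

lemma tendsto_density_two_mul_sub (hμ0 : μ 0 = 1) (i : ℤ) :
    Tendsto (fun n => density R L μ n (2 * i) - density R L μ n 0) atTop (𝓝 0) := by
  induction i using Int.induction_on with
  | zero => simp
  | succ i ih =>
    simpa [mul_add, add_assoc] using
      (h.tendsto_density_sub hμ0 (2 * i + 1)).add ih
  | pred i ih =>
    have := (h.tendsto_density_sub hμ0 (2 * (-(i : ℤ)) - 1)).neg.add ih
    simp only [neg_zero, zero_add] at this
    refine this.congr fun n => ?_
    ring_nf

lemma measure_eq_flux_add (j : ℤ) : μ j = μ (j - 1) * R (j - 1) + μ j * R j := by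
  rw [← h.balance_sub_one]
  linear_combination -(μ j) * h.right_add_left j

lemma hasSum_measure {Φ : ℝ} (hF : HasSum (fun j => μ j * R j) Φ) : HasSum μ (2 * Φ) := by
  rw [two_mul, show μ = fun j => μ (j - 1) * R (j - 1) + μ j * R j from
    funext h.measure_eq_flux_add]
  exact ((Equiv.subRight (1 : ℤ)).hasSum_iff.mpr hF).add hF

lemma hasSum_two_mul {T : ℝ} (hT : HasSum μ T) : HasSum (fun i => μ (2 * i)) (T / 2) := by
  set F : ℤ → ℝ := fun j => μ j * R j
  have hF : Summable F :=
    hT.summable.of_nonneg_of_le (fun j => (mul_pos (h.measure_pos j) (h.right_pos j)).le)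
      fun j => mul_le_of_le_one_right (h.measure_pos j).le (h.right_le_one j)
  have hinj : Function.Injective fun i : ℤ => 2 * i := mul_right_injective₀ two_ne_zero
  have he : HasSum (fun i => F (2 * i)) (∑' i, F (2 * i)) := (hF.comp_injective hinj).hasSum
  have ho : HasSum (fun i => F (2 * i + 1)) (∑' i, F (2 * i + 1)) :=
    (hF.comp_injective ((add_left_injective 1).comp hinj)).hasSum
  have heven : HasSum (fun i => μ (2 * i)) (∑' i, F (2 * i + 1) + ∑' i, F (2 * i)) := by
    have hodd := (Equiv.subRight (1 : ℤ)).hasSum_iff.mpr ho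
    rw [show (fun i => μ (2 * i)) = fun i => F (2 * (i - 1) + 1) + F (2 * i) from
      funext fun i => by rw [h.measure_eq_flux_add]; ring_nf; rfl]
    exact hodd.add he
  rw [hT.unique (h.hasSum_measure hF.hasSum), ← (he.int_even_add_odd ho).unique hF.hasSum,
    mul_div_cancel_left₀ _ two_ne_zero, add_comm]
  exact heven

lemma tendsto_sum_occupation_sub (hμ0 : μ 0 = 1) (s : Finset ℤ) :
    Tendsto (fun n => ∑ i ∈ s, occupation R L n (2 * i) -
      (∑ i ∈ s, μ (2 * i)) * occupation R L n 0) atTop (𝓝 0) := by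
  have hterm : ∀ i ∈ s, Tendsto (fun n => μ (2 * i) *
      (density R L μ n (2 * i) - density R L μ n 0)) atTop (𝓝 0) := fun i _ => by
    simpa using (h.tendsto_density_two_mul_sub hμ0 i).const_mul (μ (2 * i))
  have hsum := tendsto_finsetSum s hterm
  rw [Finset.sum_const_zero] at hsum
  refine hsum.congr fun n => ?_
  rw [Finset.sum_mul, ← Finset.sum_sub_distrib]
  refine Finset.sum_congr rfl fun i _ => ?_
  rw [mul_sub, h.mul_density, density, hμ0, div_one]

lemma hasSum_occupation_two_mul (m : ℕ) :
    HasSum (fun i => occupation R L (2 * m) (2 * i)) 1 := by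
  have hinj : Function.Injective fun i : ℤ => 2 * i := mul_right_injective₀ two_ne_zero
  refine (hinj.hasSum_iff fun j hj => occupation_eq_zero_of_odd ?_).2 (h.hasSum_occupation _)
  rw [range_two_mul, Set.mem_ofPred_eq, Int.not_even_iff_odd] at hj
  exact hj.add_even (by simp)

lemma sum_occupation_two_mul_le (s : Finset ℤ) (m : ℕ) :
    ∑ i ∈ s, occupation R L (2 * m) (2 * i) ≤ 1 :=
  sum_le_hasSum s (fun _ _ => h.occupation_nonneg _ _) (h.hasSum_occupation_two_mul m)

lemma sub_le_sum_occupation_two_mul (hμ0 : μ 0 = 1) {W : ℝ}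
    (hW : HasSum (fun i => μ (2 * i)) W) (s : Finset ℤ) (m : ℕ) :
    1 - W + ∑ i ∈ s, μ (2 * i) ≤ ∑ i ∈ s, occupation R L (2 * m) (2 * i) := by
  have := sum_le_hasSum s (fun i _ => sub_nonneg.2 (h.occupation_le hμ0 (2 * m) (2 * i)))
    (hW.sub (h.hasSum_occupation_two_mul m))
  rw [Finset.sum_sub_distrib] at this
  linarith

theorem tendsto_occupation_two_mul_zero (hμ0 : μ 0 = 1) {T : ℝ} (hT : HasSum μ T) :
    Tendsto (fun m => occupation R L (2 * m) 0) atTop (𝓝 (2 / T)) := by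
  have hW := h.hasSum_two_mul hT
  have hWpos : 0 < T / 2 := by
    have := le_hasSum hW 0 fun i _ => (h.measure_pos _).le
    rw [mul_zero, hμ0] at this
    linarith
  have ht : Tendsto (fun s : Finset ℤ => ∑ i ∈ s, μ (2 * i)) atTop (𝓝 (T / 2)) := hW
  have hdouble : Tendsto (fun m : ℕ => 2 * m) atTop atTop :=
    tendsto_atTop_mono (fun m => by simp; omega) tendsto_id
  rw [show 2 / T = 1 / (T / 2) by rw [one_div_div]]
  refine tendsto_of_eventually_forall_lt_lt
    (lo := fun s => (1 - T / 2 + ∑ i ∈ s, μ (2 * i)) / ∑ i ∈ s, μ (2 * i))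
    (hi := fun s => 1 / ∑ i ∈ s, μ (2 * i)) ?_ (tendsto_const_nhds.div ht hWpos.ne') ?_
  · have := (tendsto_const_nhds (x := 1 - T / 2)).add ht |>.div ht hWpos.ne'
    rwa [sub_add_cancel] at this
  filter_upwards [ht.eventually (eventually_gt_nhds hWpos)] with s hs η hη
  have hηs : 0 < η * ∑ i ∈ s, μ (2 * i) := mul_pos hη hs
  filter_upwards [((h.tendsto_sum_occupation_sub hμ0 s).comp hdouble).eventually
    (Ioo_mem_nhds (neg_neg_of_pos hηs) hηs)] with m hm
  have hup := h.sum_occupation_two_mul_le s m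
  have hlow := h.sub_le_sum_occupation_two_mul hμ0 hW s m
  simp only [Function.comp_apply] at hm
  constructor
  · rw [sub_lt_iff_lt_add, div_lt_iff₀ hs]
    linarith
  · rw [← sub_lt_iff_lt_add, lt_div_iff₀ hs]
    linarith

end IsReversible

end BirthDeath

open BirthDeath

lemma gR_add_gL (ε : ℝ) (j : ℤ) : gR ε j + gL ε j = 1 := by
  unfold gR gL; split_ifs <;> ring

lemma gR_neg (ε : ℝ) (j : ℤ) : gR ε (-j) = gL ε j := by
  unfold gR gL
  split_ifs <;> first | omega | (push_cast; ring)

lemma gL_neg (ε : ℝ) (j : ℤ) : gL ε (-j) = gR ε j := by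
  rw [← gR_neg, neg_neg]

lemma gR_natCast_succ (ε : ℝ) (k : ℕ) : gR ε (k + 1) = (1 - ε / (k + 1)) / 2 := by
  rw [gR, if_neg (by omega)]; push_cast; rfl

lemma gL_natCast_succ (ε : ℝ) (k : ℕ) : gL ε (k + 1) = (1 + ε / (k + 1)) / 2 := by
  rw [gL, if_neg (by omega)]; push_cast; rfl

lemma gR_pos {ε : ℝ} (hε : |ε| < 1) (j : ℤ) : 0 < gR ε j := by
  unfold gR
  split_ifs with hj
  · norm_num
  · have h1 : (1 : ℝ) ≤ |(j : ℝ)| := by exact_mod_cast Int.one_le_abs hj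
    have h2 : |ε / j| < 1 := by
      rw [abs_div, div_lt_one (by positivity)]; linarith
    linarith [le_abs_self (ε / j)]

lemma gL_pos {ε : ℝ} (hε : |ε| < 1) (j : ℤ) : 0 < gL ε j := by
  rw [← gR_neg]; exact gR_pos hε _

noncomputable def gNu (ε : ℝ) : ℕ → ℝ
  | 0 => 1
  | k + 1 => gNu ε k * gR ε k / gL ε (k + 1)

noncomputable def gMu (ε : ℝ) (j : ℤ) : ℝ := gNu ε j.natAbs

lemma gNu_pos {ε : ℝ} (hε : |ε| < 1) (k : ℕ) : 0 < gNu ε k := by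
  induction k with
  | zero => exact one_pos
  | succ k ih => exact div_pos (mul_pos ih (gR_pos hε k)) (gL_pos hε _)

lemma gNu_succ_mul {ε : ℝ} (hε : |ε| < 1) (k : ℕ) :
    gNu ε (k + 1) * gL ε (k + 1) = gNu ε k * gR ε k :=
  div_mul_cancel₀ _ (gL_pos hε _).ne'

lemma gMu_balance {ε : ℝ} (hε : |ε| < 1) (j : ℤ) :
    gMu ε j * gR ε j = gMu ε (j + 1) * gL ε (j + 1) := by
  rcases j with k | k
  · have hk : ((k : ℤ) + 1).natAbs = k + 1 := by omega
    simp only [Int.ofNat_eq_natCast, gMu, hk, Int.natAbs_natCast]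
    exact (gNu_succ_mul hε k).symm
  · have hk : Int.negSucc k + 1 = -k := by omega
    rw [hk, Int.negSucc_eq, gR_neg, gL_neg]
    simp only [gMu, Int.natAbs_neg, Int.natAbs_natCast]
    exact_mod_cast gNu_succ_mul hε k

lemma isReversible_gillis {ε : ℝ} (hε : |ε| < 1) : IsReversible (gR ε) (gL ε) (gMu ε) where
  right_pos := gR_pos hε
  left_pos := gL_pos hε
  right_add_left := gR_add_gL ε
  measure_pos _ := gNu_pos hε _
  balance := gMu_balance hε

lemma gP_eq_occupation (ε : ℝ) : gP ε = occupation (gR ε) (gL ε) := by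
  funext n
  induction n with
  | zero => rfl
  | succ n ih => funext j; simp [gP, occupation, ih]

noncomputable def gFlux (ε : ℝ) (k : ℕ) : ℝ := gNu ε k * gR ε k

lemma gFlux_zero (ε : ℝ) : gFlux ε 0 = 1 / 2 := by
  simp [gFlux, gNu, gR]

lemma gFlux_succ {ε : ℝ} (hε : |ε| < 1) (k : ℕ) :
    (k + 1 + ε) * gFlux ε (k + 1) = (k + 1 - ε) * gFlux ε k := by
  have hk : (k : ℝ) + 1 ≠ 0 := by positivity
  rw [gFlux, gFlux, ← gNu_succ_mul hε k]
  push_cast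
  rw [gR_natCast_succ, gL_natCast_succ]
  field_simp

lemma hasSum_gFlux {ε : ℝ} (hε : ε ∈ Set.Ioo (1 / 2 : ℝ) 1) :
    HasSum (gFlux ε) (ε / (2 * (2 * ε - 1))) := by
  obtain ⟨hε₁, hε₂⟩ := hε
  have habs : |ε| < 1 := abs_lt.2 ⟨by linarith, hε₂⟩
  have hd : 0 < 2 * ε - 1 := by linarith
  set C : ℕ → ℝ := fun k => (k + ε) * gFlux ε k / (2 * ε - 1)
  have hφ : ∀ k, 0 ≤ gFlux ε k := fun k => (mul_pos (gNu_pos habs k) (gR_pos habs k)).le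
  have hC : ∀ k, 0 ≤ C k := fun k => by have := hφ k; positivity
  have htel : ∀ k, C k - C (k + 1) = gFlux ε k := fun k => by
    simp only [C]
    rw [div_sub_div_same, div_eq_iff hd.ne']
    push_cast
    linear_combination -(gFlux_succ habs k)
  have hpartial : ∀ m, ∑ k ∈ Finset.range m, gFlux ε k = C 0 - C m := fun m => by
    rw [← Finset.sum_range_sub']
    simp only [htel]
  have hs : Summable (gFlux ε) :=
    summable_of_sum_range_le (c := C 0) hφ fun m => by rw [hpartial]; linarith [hC m]
  have hCt : Tendsto C atTop (𝓝 (C 0 - ∑' k, gFlux ε k)) :=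
    (hs.hasSum.tendsto_sum_nat.const_sub (C 0)).congr fun m => by rw [hpartial]; ring
  have hlim : C 0 - ∑' k, gFlux ε k = 0 := by
    have hmul := (hCt.const_mul (2 * ε - 1)).sub (hs.tendsto_atTop_zero.const_mul ε)
    rw [mul_zero, sub_zero] at hmul
    refine (mul_eq_zero.1 (hs.eq_zero_of_tendsto_natCast_mul (hmul.congr fun n => ?_))).resolve_left
      hd.ne'
    simp only [C]
    field_simp
    ring
  have hC0 : C 0 = ε / (2 * (2 * ε - 1)) := by
    simp only [C, gFlux_zero, Nat.cast_zero, zero_add]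
    field_simp
  rw [← hC0, sub_eq_zero.1 hlim]
  exact hs.hasSum

lemma hasSum_gMu {ε : ℝ} (hε : ε ∈ Set.Ioo (1 / 2 : ℝ) 1) :
    HasSum (gMu ε) (2 * ε / (2 * ε - 1)) := by
  have habs : |ε| < 1 := abs_lt.2 ⟨by linarith [hε.1], hε.2⟩
  have hneg : ∀ k : ℕ, gMu ε (-(k + 1)) * gR ε (-(k + 1)) = gFlux ε k := fun k => by
    rw [gR_neg, gFlux, ← gNu_succ_mul habs]
    simp only [gMu]
    rw [show (-((k : ℤ) + 1)).natAbs = k + 1 by omega]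
  have hflux : HasSum (fun j => gMu ε j * gR ε j) (ε / (2 * ε - 1)) := by
    have := HasSum.of_nat_of_neg_add_one (f := fun j => gMu ε j * gR ε j) (hasSum_gFlux hε)
      (by simpa only [hneg] using hasSum_gFlux hε)
    rwa [← add_div, ← two_mul, mul_div_mul_left _ _ two_ne_zero] at this
  rw [mul_div_assoc]
  exact (isReversible_gillis habs).hasSum_measure hflux

/-- For `ε ∈ (1/2, 1)` the probability of being at the origin after `2n` steps converges
to `2 − 1/ε`. -/
theorem gillis_origin_limit (ε : ℝ) (hε : ε ∈ Set.Ioo (1 / 2 : ℝ) 1) :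
    Tendsto (fun n : ℕ => gP ε (2 * n) 0) atTop (nhds (2 - 1 / ε)) := by
  have habs : |ε| < 1 := abs_lt.2 ⟨by linarith [hε.1], hε.2⟩
  have hε0 : ε ≠ 0 := by linarith [hε.1]
  have hd : 2 * ε - 1 ≠ 0 := by linarith [hε.1]
  rw [gP_eq_occupation, show 2 - 1 / ε = 2 / (2 * ε / (2 * ε - 1)) by field_simp]
  exact (isReversible_gillis habs).tendsto_occupation_two_mul_zero rfl (hasSum_gMu hε)
end

section
/- The return probability R = Σ_{n≥1} F_n of the Gillis random walk satisfies: R = 1/|ε| − 1 if −1 < ε < −1/2, and R = 1 if −1/2 ≤ ε < 1. In particular, the walk is transient for −1 < ε < −1/2 and recurrent for −1/2 ≤ ε < 1. -/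
/-!
Write `taboo ε n j` for the probability of being at `j` at time `n` without having revisited `0`.
Splitting `P_n(j)` at the first return to `0` shows that the renewal sequence is
`F_{n+1} = (1 + ε) · taboo ε n 1`.

If `φ : ℕ → ℝ` is harmonic for the walk at the sites `i ≥ 1`, then one step of the taboo walk
preserves `Σ_j φ j · taboo ε n j` up to the mass `φ 0 · F_{n+1} / 2` leaving through `0`, whence
`φ 0 · Σ_{k ≤ n+1} F_k = φ 1 - 2 Σ_j φ j · taboo ε n j`.
The scale function `s` (harmonic, `s 0 = 0`, `s 1 = 1`, increments of order `k ^ (2ε)`) diverges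
exactly when `ε ≥ -1/2`. In that case `Σ_j s j · taboo ε n j = 1/2` for all `n`, and since
`taboo ε n j → 0` for each `j`, the mass `Σ_j taboo ε n j` tends to `0`; with `φ = 1` this gives
`R = 1`. For `ε < -1/2`, `s` increases to `S = ε / (1 + 2ε)`, and `φ = S - s` tends to `0`, so
`R = (S - 1) / S = 1/|ε| - 1`.
-/

open Filter

open Finset Filter Topology Asymptotics

theorem norm_sum_mul_le_sum_range_add {s : Finset ℕ} {w ψ θ : ℕ → ℝ} {c B : ℝ} {M : ℕ}
    (hw : ∀ j, 0 ≤ w j) (hc : 0 ≤ c) (hM : ∀ j ≥ M, ‖ψ j‖ ≤ c * ‖θ j‖)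
    (hB : ∑ j ∈ s, ‖θ j‖ * w j ≤ B) :
    ‖∑ j ∈ s, ψ j * w j‖ ≤ ∑ j ∈ range M, ‖ψ j‖ * w j + c * B := by
  have htail : ∑ j ∈ s \ range M, ‖ψ j‖ * w j ≤ c * B :=
    calc ∑ j ∈ s \ range M, ‖ψ j‖ * w j ≤ ∑ j ∈ s \ range M, c * (‖θ j‖ * w j) :=
          sum_le_sum fun j hj => by
            rw [← mul_assoc]
            exact mul_le_mul_of_nonneg_right (hM j (by simpa using (mem_sdiff.1 hj).2)) (hw j)
      _ ≤ ∑ j ∈ s, c * (‖θ j‖ * w j) :=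
          sum_le_sum_of_subset_of_nonneg sdiff_subset fun j _ _ =>
            mul_nonneg hc (mul_nonneg (norm_nonneg _) (hw j))
      _ ≤ c * B := by rw [← mul_sum]; exact mul_le_mul_of_nonneg_left hB hc
  calc ‖∑ j ∈ s, ψ j * w j‖ ≤ ∑ j ∈ s, ‖ψ j‖ * w j := by
        refine (norm_sum_le _ _).trans_eq (sum_congr rfl fun j _ => ?_)
        rw [norm_mul, Real.norm_of_nonneg (hw j)]
    _ = ∑ j ∈ s ∩ range M, ‖ψ j‖ * w j + ∑ j ∈ s \ range M, ‖ψ j‖ * w j :=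
        (sum_inter_add_sum_sdiff _ _ _).symm
    _ ≤ _ := add_le_add (sum_le_sum_of_subset_of_nonneg inter_subset_right fun j _ _ =>
        mul_nonneg (norm_nonneg _) (hw j)) htail

theorem tendsto_sum_mul_zero_of_isLittleO {w : ℕ → ℕ → ℝ} {s : ℕ → Finset ℕ} {ψ θ : ℕ → ℝ}
    {B : ℝ} (hw_nonneg : ∀ n j, 0 ≤ w n j) (hw : ∀ j, Tendsto (fun n => w n j) atTop (𝓝 0))
    (hψθ : ψ =o[atTop] θ) (hB : ∀ n, ∑ j ∈ s n, ‖θ j‖ * w n j ≤ B) :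
    Tendsto (fun n => ∑ j ∈ s n, ψ j * w n j) atTop (𝓝 0) := by
  have hB0 : 0 ≤ B :=
    (sum_nonneg fun j _ => mul_nonneg (norm_nonneg _) (hw_nonneg 0 j)).trans (hB 0)
  rw [Metric.tendsto_atTop]
  intro δ hδ
  set c := δ / (2 * (B + 1))
  have hc : 0 < c := by positivity
  have hcB : c * B < δ / 2 := by
    rw [div_mul_eq_mul_div, div_lt_div_iff₀ (by positivity) two_pos]
    nlinarith
  obtain ⟨M, hM⟩ := eventually_atTop.1 (hψθ.bound hc)
  have hhead : Tendsto (fun n => ∑ j ∈ range M, ‖ψ j‖ * w n j) atTop (𝓝 0) := by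
    simpa using tendsto_finsetSum (range M) fun j _ => (hw j).const_mul ‖ψ j‖
  obtain ⟨N, hN⟩ := eventually_atTop.1 (hhead.eventually (gt_mem_nhds (half_pos hδ)))
  refine ⟨N, fun n hn => ?_⟩
  rw [dist_zero_right]
  linarith [hN n hn, norm_sum_mul_le_sum_range_add (hw_nonneg n) hc.le hM (hB n)]

theorem eq_of_renewal {R : Type*} [Ring R] {p F G : ℕ → R} (hp : p 0 = 1) (h0 : F 0 = G 0)
    (hF : ∀ n, 1 ≤ n → p n = ∑ k ∈ Icc 1 n, F k * p (n - k))
    (hG : ∀ n, 1 ≤ n → p n = ∑ k ∈ Icc 1 n, G k * p (n - k)) : F = G := by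
  funext n
  induction n using Nat.strong_induction_on with
  | _ n ih =>
    rcases n with _ | m
    · exact h0
    have hsplit : ∀ H : ℕ → R, ∑ k ∈ Icc 1 (m + 1), H k * p (m + 1 - k)
        = ∑ k ∈ Icc 1 m, H k * p (m + 1 - k) + H (m + 1) := by
      intro H
      rw [sum_Icc_succ_top (by omega), Nat.sub_self, hp, mul_one]
    have hlow : ∑ k ∈ Icc 1 m, F k * p (m + 1 - k) = ∑ k ∈ Icc 1 m, G k * p (m + 1 - k) :=
      sum_congr rfl fun k hk => by rw [ih k (by simp at hk; omega)]
    have := (hF (m + 1) (by omega)).symm.trans (hG (m + 1) (by omega))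
    rwa [hsplit, hsplit, hlow, add_right_inj] at this

namespace Gillis

variable {ε : ℝ}

lemma gR_add_gL (j : ℤ) : gR ε j + gL ε j = 1 := by
  unfold gR gL; split <;> ring

lemma abs_div_intCast_lt_one (hε : |ε| < 1) {j : ℤ} (hj : j ≠ 0) : |ε / j| < 1 := by
  have : (1 : ℝ) ≤ |(j : ℝ)| := by exact_mod_cast Int.one_le_abs hj
  rw [abs_div, div_lt_one (by linarith)]
  linarith

lemma gR_pos (hε : |ε| < 1) (j : ℤ) : 0 < gR ε j := by
  unfold gR; split
  · norm_num
  · linarith [(abs_lt.1 (abs_div_intCast_lt_one hε ‹j ≠ 0›)).2]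

lemma gL_pos (hε : |ε| < 1) (j : ℤ) : 0 < gL ε j := by
  unfold gL; split
  · norm_num
  · linarith [(abs_lt.1 (abs_div_intCast_lt_one hε ‹j ≠ 0›)).1]

lemma gR_neg (j : ℤ) : gR ε (-j) = gL ε j := by
  unfold gR gL
  rcases eq_or_ne j 0 with rfl | hj
  · simp
  · rw [if_neg (neg_ne_zero.2 hj), if_neg hj, Int.cast_neg, div_neg, sub_neg_eq_add]

lemma gL_neg (j : ℤ) : gL ε (-j) = gR ε j := by
  simpa using (gR_neg (ε := ε) (-j)).symm

lemma gL_one : gL ε 1 = (1 + ε) / 2 := by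
  norm_num [gL]

noncomputable def taboo (ε : ℝ) : ℕ → ℤ → ℝ
  | 0, j => if j = 0 then 1 else 0
  | n + 1, j =>
    if j = 0 then 0 else gR ε (j - 1) * taboo ε n (j - 1) + gL ε (j + 1) * taboo ε n (j + 1)

lemma taboo_succ_zero (n : ℕ) : taboo ε (n + 1) 0 = 0 := by
  simp [taboo]

lemma taboo_succ (n : ℕ) {j : ℤ} (hj : j ≠ 0) :
    taboo ε (n + 1) j = gR ε (j - 1) * taboo ε n (j - 1) + gL ε (j + 1) * taboo ε n (j + 1) :=
  if_neg hj

lemma taboo_nonneg (hε : |ε| < 1) (n : ℕ) (j : ℤ) : 0 ≤ taboo ε n j := by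
  induction n generalizing j with
  | zero => unfold taboo; split <;> norm_num
  | succ n ih =>
    unfold taboo; split
    · exact le_rfl
    · exact add_nonneg (mul_nonneg (gR_pos hε _).le (ih _)) (mul_nonneg (gL_pos hε _).le (ih _))

lemma taboo_neg (n : ℕ) (j : ℤ) : taboo ε n (-j) = taboo ε n j := by
  induction n generalizing j with
  | zero => simp [taboo]
  | succ n ih =>
    rcases eq_or_ne j 0 with rfl | hj
    · simp
    rw [taboo_succ n (neg_ne_zero.2 hj), taboo_succ n hj, show -j - 1 = -(j + 1) by ring,
      show -j + 1 = -(j - 1) by ring, gR_neg, gL_neg, ih, ih, add_comm]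

lemma taboo_eq_zero_of_lt_abs {n : ℕ} {j : ℤ} (h : (n : ℤ) < |j|) : taboo ε n j = 0 := by
  induction n generalizing j with
  | zero =>
    have hj : j ≠ 0 := abs_pos.1 (by simpa using h)
    simp [taboo, hj]
  | succ n ih =>
    push_cast [lt_abs] at h
    rw [taboo_succ n (by omega), ih (by rw [lt_abs]; omega), ih (by rw [lt_abs]; omega), mul_zero,
      mul_zero, add_zero]

noncomputable def firstReturn (ε : ℝ) : ℕ → ℝ
  | 0 => 0
  | n + 1 => gR ε (-1) * taboo ε n (-1) + gL ε 1 * taboo ε n 1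

lemma firstReturn_succ (n : ℕ) : firstReturn ε (n + 1) = (1 + ε) * taboo ε n 1 := by
  rw [firstReturn, gR_neg, taboo_neg, gL_one]
  ring

lemma firstReturn_nonneg (hε : |ε| < 1) (n : ℕ) : 0 ≤ firstReturn ε n := by
  rcases n with _ | n
  · exact le_rfl
  · rw [firstReturn_succ]
    exact mul_nonneg (by linarith [(abs_lt.1 hε).1]) (taboo_nonneg hε n 1)

lemma gP_eq_taboo_add_sum (n : ℕ) (j : ℤ) :
    gP ε n j = taboo ε n j + ∑ k ∈ Icc 1 n, firstReturn ε k * gP ε (n - k) j := by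
  induction n generalizing j with
  | zero => simp [gP, taboo]
  | succ n ih =>
    have hshift : ∀ k ∈ Icc 1 n, firstReturn ε k * gP ε (n + 1 - k) j
        = gR ε (j - 1) * (firstReturn ε k * gP ε (n - k) (j - 1))
          + gL ε (j + 1) * (firstReturn ε k * gP ε (n - k) (j + 1)) := by
      intro k hk
      rw [show n + 1 - k = n - k + 1 by simp at hk; omega, gP]
      ring
    have htop : firstReturn ε (n + 1) * gP ε 0 j = if j = 0 then firstReturn ε (n + 1) else 0 := by
      split <;> simp [gP, *]
    have hstep : gR ε (j - 1) * taboo ε n (j - 1) + gL ε (j + 1) * taboo ε n (j + 1)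
        = taboo ε (n + 1) j + if j = 0 then firstReturn ε (n + 1) else 0 := by
      rcases eq_or_ne j 0 with rfl | hj
      · simp [taboo_succ_zero, firstReturn]
      · rw [taboo_succ n hj, if_neg hj, add_zero]
    rw [gP, ih, ih, sum_Icc_succ_top (by omega), sum_congr rfl hshift, sum_add_distrib,
      ← mul_sum, ← mul_sum, Nat.sub_self, htop]
    linear_combination hstep

lemma eq_firstReturn_of_renewal {F : ℕ → ℝ} (hF0 : F 0 = 0)
    (hren : ∀ n : ℕ, 1 ≤ n → gP ε n 0 = ∑ k ∈ Icc 1 n, F k * gP ε (n - k) 0) :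
    F = firstReturn ε :=
  eq_of_renewal (p := fun n => gP ε n 0) (by simp [gP]) hF0 hren fun n hn => by
    obtain ⟨m, rfl⟩ := Nat.exists_eq_add_of_le' hn
    simpa [taboo_succ_zero] using gP_eq_taboo_add_sum (ε := ε) (m + 1) 0

def IsHarmonic (ε : ℝ) (φ : ℕ → ℝ) : Prop :=
  ∀ i : ℕ, gR ε (i + 1) * φ (i + 2) + gL ε (i + 1) * φ i = φ (i + 1)

lemma isHarmonic_const (c : ℝ) : IsHarmonic ε fun _ => c := fun i => by
  linear_combination c * gR_add_gL (ε := ε) (i + 1)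

lemma IsHarmonic.const_sub {φ : ℕ → ℝ} (hφ : IsHarmonic ε φ) (c : ℝ) :
    IsHarmonic ε fun i => c - φ i := fun i => by
  linear_combination c * gR_add_gL (ε := ε) (i + 1) - hφ i

noncomputable def tabooExpect (ε : ℝ) (φ : ℕ → ℝ) (n : ℕ) : ℝ :=
  ∑ j ∈ range (n + 1), φ j * taboo ε n j

lemma tabooExpect_nonneg (hε : |ε| < 1) {φ : ℕ → ℝ} (hφ : ∀ j, 0 ≤ φ j) (n : ℕ) :
    0 ≤ tabooExpect ε φ n :=
  sum_nonneg fun j _ => mul_nonneg (hφ j) (taboo_nonneg hε n j)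

lemma tabooExpect_succ (φ : ℕ → ℝ) (n : ℕ) :
    tabooExpect ε φ (n + 1) = ∑ i ∈ range (n + 1), φ (i + 1) * taboo ε (n + 1) (i + 1) := by
  rw [tabooExpect, sum_range_succ']
  simp [taboo_succ_zero]

lemma tabooExpect_succ_succ {φ : ℕ → ℝ} (hφ : IsHarmonic ε φ) (n : ℕ) :
    tabooExpect ε φ (n + 2) = tabooExpect ε φ (n + 1) - φ 0 * firstReturn ε (n + 2) / 2 := by
  have hstep (i : ℕ) : taboo ε (n + 2) (i + 1)
      = gR ε i * taboo ε (n + 1) i + gL ε (i + 2) * taboo ε (n + 1) (i + 2) := by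
    rw [taboo_succ (n + 1) (by omega), add_sub_cancel_right, add_assoc]
    norm_num
  have hgR : ∑ i ∈ range (n + 2), φ (i + 1) * (gR ε i * taboo ε (n + 1) i)
      = ∑ i ∈ range (n + 1), gR ε (i + 1) * φ (i + 2) * taboo ε (n + 1) (i + 1) := by
    rw [sum_range_succ']
    push_cast [add_assoc, one_add_one_eq_two, taboo_succ_zero, mul_zero, add_zero]
    exact sum_congr rfl fun i _ => by ring
  have hgL : ∑ i ∈ range (n + 2), φ (i + 1) * (gL ε (i + 2) * taboo ε (n + 1) (i + 2))
      = ∑ i ∈ range (n + 1), φ i * (gL ε (i + 1) * taboo ε (n + 1) (i + 1))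
        - φ 0 * gL ε 1 * taboo ε (n + 1) 1 := by
    have hshift :=
      sum_range_succ' (fun i => φ i * (gL ε (i + 1) * taboo ε (n + 1) (i + 1))) (n + 2)
    have h2 : taboo ε (n + 1) (n + 2) = 0 := taboo_eq_zero_of_lt_abs (by rw [lt_abs]; omega)
    have h3 : taboo ε (n + 1) (n + 3) = 0 := taboo_eq_zero_of_lt_abs (by rw [lt_abs]; omega)
    rw [sum_range_succ, sum_range_succ] at hshift
    push_cast [add_assoc, one_add_one_eq_two] at hshift
    norm_num [h2, h3] at hshift
    linarith
  rw [tabooExpect_succ, tabooExpect_succ, firstReturn_succ]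
  have hharm : ∑ i ∈ range (n + 1), φ (i + 1) * taboo ε (n + 1) (i + 1)
      = ∑ i ∈ range (n + 1), gR ε (i + 1) * φ (i + 2) * taboo ε (n + 1) (i + 1)
        + ∑ i ∈ range (n + 1), φ i * (gL ε (i + 1) * taboo ε (n + 1) (i + 1)) := by
    rw [← sum_add_distrib]
    exact sum_congr rfl fun i _ => by rw [← hφ i]; ring
  simp_rw [hstep, mul_add, sum_add_distrib, hgR, hgL, hharm, gL_one]
  ring

lemma two_mul_tabooExpect {φ : ℕ → ℝ} (hφ : IsHarmonic ε φ) (n : ℕ) :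
    2 * tabooExpect ε φ (n + 1) = φ 1 - φ 0 * ∑ k ∈ range (n + 2), firstReturn ε k := by
  induction n with
  | zero => norm_num [tabooExpect, sum_range_succ, firstReturn, taboo, gR]; ring
  | succ n ih =>
    rw [tabooExpect_succ_succ hφ, sum_range_succ _ (n + 2)]
    linear_combination ih

lemma sum_firstReturn_le_one (hε : |ε| < 1) (n : ℕ) : ∑ k ∈ range n, firstReturn ε k ≤ 1 := by
  have hmass := two_mul_tabooExpect (isHarmonic_const (ε := ε) 1) n
  have hpos := tabooExpect_nonneg hε (fun _ => zero_le_one) (n + 1)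
  calc ∑ k ∈ range n, firstReturn ε k ≤ ∑ k ∈ range (n + 2), firstReturn ε k :=
        sum_le_sum_of_subset_of_nonneg (range_mono (by omega))
          fun k _ _ => firstReturn_nonneg hε k
    _ ≤ 1 := by linarith

lemma tabooExpect_one_le (hε : |ε| < 1) (n : ℕ) : tabooExpect ε (fun _ => 1) n ≤ 1 := by
  rcases n with _ | n
  · simp [tabooExpect, taboo]
  · have := two_mul_tabooExpect (isHarmonic_const (ε := ε) 1) n
    have := sum_nonneg fun k (_ : k ∈ range (n + 2)) => firstReturn_nonneg hε k
    linarith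

lemma summable_firstReturn (hε : |ε| < 1) : Summable (firstReturn ε) :=
  summable_of_sum_range_le (firstReturn_nonneg hε) (sum_firstReturn_le_one hε)

lemma tendsto_taboo (hε : |ε| < 1) : ∀ j : ℕ, Tendsto (fun n => taboo ε n j) atTop (𝓝 0)
  | 0 => (tendsto_add_atTop_iff_nat 1).1 (by simp [taboo_succ_zero])
  | 1 => by
    have h := (tendsto_add_atTop_iff_nat 1).2 (summable_firstReturn hε).tendsto_atTop_zero
    have hε1 : 1 + ε ≠ 0 := by linarith [(abs_lt.1 hε).1]
    simpa [firstReturn_succ, hε1] using h.const_mul (1 + ε)⁻¹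
  | j + 2 => by
    have hL := gL_pos hε (j + 2)
    have hlim := ((tendsto_add_atTop_iff_nat 1).2 (tendsto_taboo hε (j + 1))).div_const
      (gL ε (j + 2))
    rw [zero_div] at hlim
    refine squeeze_zero (fun n => taboo_nonneg hε n _) (fun n => ?_) hlim
    rw [le_div_iff₀ hL, taboo_succ n (by omega)]
    have := mul_nonneg (gR_pos hε (j + 1 - 1)).le (taboo_nonneg hε n (j + 1 - 1))
    push_cast
    rw [show (j : ℤ) + 1 + 1 = j + 2 by ring]
    linarith

lemma tendsto_tabooExpect_zero (hε : |ε| < 1) {ψ θ : ℕ → ℝ} {B : ℝ} (hψθ : ψ =o[atTop] θ)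
    (hB : ∀ n, tabooExpect ε (fun j => ‖θ j‖) n ≤ B) :
    Tendsto (tabooExpect ε ψ) atTop (𝓝 0) :=
  tendsto_sum_mul_zero_of_isLittleO (fun n j => taboo_nonneg hε n j) (tendsto_taboo hε) hψθ hB

lemma hasSum_firstReturn_of_isHarmonic (hε : |ε| < 1) {φ : ℕ → ℝ} (hφ : IsHarmonic ε φ)
    (h0 : φ 0 ≠ 0) (hlim : Tendsto (tabooExpect ε φ) atTop (𝓝 0)) :
    HasSum (firstReturn ε) (φ 1 / φ 0) := by
  refine (hasSum_iff_tendsto_nat_of_nonneg (firstReturn_nonneg hε) _).2 <|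
    (tendsto_add_atTop_iff_nat 2).1 ?_
  have hsum (n : ℕ) :
      ∑ k ∈ range (n + 2), firstReturn ε k = (φ 1 - 2 * tabooExpect ε φ (n + 1)) / φ 0 := by
    rw [eq_div_iff h0, two_mul_tabooExpect hφ]
    ring
  simp_rw [hsum]
  simpa using
    (((hlim.comp (tendsto_add_atTop_nat 1)).const_mul 2).const_sub (φ 1)).div_const (φ 0)

noncomputable def scaleIncr (ε : ℝ) : ℕ → ℝ
  | 0 => 1
  | k + 1 => scaleIncr ε k * ((k + 1 + ε) / (k + 1 - ε))

noncomputable def scale (ε : ℝ) (n : ℕ) : ℝ := ∑ k ∈ range n, scaleIncr ε k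

lemma scaleIncr_pos (hε : |ε| < 1) (k : ℕ) : 0 < scaleIncr ε k := by
  obtain ⟨h1, h2⟩ := abs_lt.1 hε
  induction k with
  | zero => norm_num [scaleIncr]
  | succ k ih =>
    have : (0 : ℝ) ≤ k := k.cast_nonneg
    have : (0 : ℝ) < k + 1 + ε := by linarith
    have : (0 : ℝ) < k + 1 - ε := by linarith
    rw [scaleIncr]
    positivity

@[simp]
lemma scale_zero : scale ε 0 = 0 := sum_range_zero _

@[simp]
lemma scale_one : scale ε 1 = 1 := by simp [scale, scaleIncr]

lemma scale_nonneg (hε : |ε| < 1) (n : ℕ) : 0 ≤ scale ε n :=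
  sum_nonneg fun k _ => (scaleIncr_pos hε k).le

lemma isHarmonic_scale (hε : ε < 1) : IsHarmonic ε (scale ε) := fun i => by
  have hi : (i : ℝ) + 1 - ε ≠ 0 := by have := i.cast_nonneg (α := ℝ); intro; linarith
  have hi' : (i : ℝ) + 1 ≠ 0 := by positivity
  simp only [scale, sum_range_succ, gR, gL, scaleIncr]
  rw [if_neg (by omega), if_neg (by omega)]
  push_cast
  field_simp
  ring

lemma one_div_two_mul_add_one_le_scaleIncr (h1 : -(1 / 2) ≤ ε) (h2 : ε < 1) (k : ℕ) :
    1 / (2 * k + 1) ≤ scaleIncr ε k := by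
  induction k with
  | zero => norm_num [scaleIncr]
  | succ k ih =>
    have hk : (0 : ℝ) ≤ k := k.cast_nonneg
    have hfac : (2 * k + 1) / (2 * k + 3) ≤ ((k : ℝ) + 1 + ε) / (k + 1 - ε) := by
      rw [div_le_div_iff₀ (by positivity) (by linarith)]
      nlinarith
    calc 1 / (2 * ((k + 1 : ℕ) : ℝ) + 1) = 1 / (2 * k + 1) * ((2 * k + 1) / (2 * k + 3)) := by
          push_cast; field_simp; ring
      _ ≤ scaleIncr ε (k + 1) :=
          mul_le_mul ih hfac (by positivity) (scaleIncr_pos (abs_lt.2 ⟨by linarith, h2⟩) k).le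

lemma tendsto_scale_atTop (h1 : -(1 / 2) ≤ ε) (h2 : ε < 1) : Tendsto (scale ε) atTop atTop := by
  have := Real.tendsto_sum_range_one_div_nat_succ_atTop.const_mul_atTop (one_half_pos (α := ℝ))
  simp_rw [mul_sum] at this
  refine tendsto_atTop_mono (fun n => sum_le_sum fun k _ => ?_) this
  calc 1 / 2 * (1 / ((k : ℝ) + 1)) ≤ 1 / (2 * k + 1) := by
        rw [div_mul_div_comm, one_mul]
        exact one_div_le_one_div_of_le (by positivity) (by linarith)
    _ ≤ scaleIncr ε k := one_div_two_mul_add_one_le_scaleIncr h1 h2 k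

lemma one_add_two_mul_mul_scale (hε : ε < 1) (n : ℕ) :
    (1 + 2 * ε) * scale ε n = ε + (n - ε) * scaleIncr ε n := by
  induction n with
  | zero => simp [scale, scaleIncr]
  | succ n ih =>
    have hn : (n : ℝ) + 1 - ε ≠ 0 := by have := n.cast_nonneg (α := ℝ); intro; linarith
    rw [scale, sum_range_succ, ← scale, mul_add, ih, scaleIncr]
    push_cast
    field_simp
    ring

lemma tendsto_natCast_sub_mul_scaleIncr (h1 : -1 < ε) (h2 : ε < -(1 / 2)) :
    Tendsto (fun n : ℕ => (n - ε) * scaleIncr ε n) atTop (𝓝 0) := by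
  have hε : |ε| < 1 := abs_lt.2 ⟨h1, by linarith⟩
  set c : ℕ → ℝ := fun n => (n - ε) * scaleIncr ε n with hc
  have hc0 (n : ℕ) : 0 ≤ c n :=
    mul_nonneg (by linarith [n.cast_nonneg (α := ℝ)]) (scaleIncr_pos hε n).le
  have hanti : Antitone c := antitone_nat_of_succ_le fun n => by
    have hn : (n : ℝ) + 1 - ε ≠ 0 := by have := n.cast_nonneg (α := ℝ); intro; linarith
    have hstep : c (n + 1) = c n + (1 + 2 * ε) * scaleIncr ε n := by
      simp only [hc, scaleIncr]
      push_cast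
      field_simp
      ring
    nlinarith [scaleIncr_pos hε n]
  have hsum : Summable (scaleIncr ε) :=
    summable_of_sum_range_le (fun k => (scaleIncr_pos hε k).le) fun n =>
      show scale ε n ≤ ε / (1 + 2 * ε) by
        rw [le_div_iff_of_neg (by linarith)]
        linarith [one_add_two_mul_mul_scale (ε := ε) (by linarith) n, hc0 n]
  obtain ⟨l, hl⟩ : ∃ l, Tendsto c atTop (𝓝 l) :=
    ⟨_, tendsto_atTop_ciInf hanti ⟨0, Set.forall_mem_range.2 hc0⟩⟩
  obtain rfl | hl0 := (ge_of_tendsto' hl hc0).eq_or_lt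
  · exact hl
  -- If `l > 0`, then `scaleIncr ε n ≥ l / (n + 1)` contradicts summability.
  refine absurd ((summable_nat_add_iff 1).1 ((hsum.mul_left l⁻¹).of_nonneg_of_le
    (fun n => by positivity) fun n => ?_)) Real.not_summable_one_div_natCast
  have hle : l ≤ (n + 1) * scaleIncr ε n := (hanti.le_of_tendsto hl n).trans <|
    mul_le_mul_of_nonneg_right (by linarith) (scaleIncr_pos hε n).le
  push_cast
  rw [div_le_iff₀ (by positivity), inv_mul_eq_div, div_mul_eq_mul_div, le_div_iff₀ hl0]
  linarith

lemma tendsto_scale_of_lt (h1 : -1 < ε) (h2 : ε < -(1 / 2)) :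
    Tendsto (scale ε) atTop (𝓝 (ε / (1 + 2 * ε))) := by
  have hlim := ((tendsto_natCast_sub_mul_scaleIncr h1 h2).const_add ε).div_const (1 + 2 * ε)
  rw [add_zero] at hlim
  refine hlim.congr fun n => ?_
  rw [div_eq_iff (by linarith)]
  linear_combination (one_add_two_mul_mul_scale (ε := ε) (by linarith) n).symm

theorem hasSum_firstReturn_of_neg_half_le (h1 : -(1 / 2) ≤ ε) (h2 : ε < 1) :
    HasSum (firstReturn ε) 1 := by
  have hε : |ε| < 1 := abs_lt.2 ⟨by linarith, h2⟩
  have hnorm : (fun j => ‖scale ε j‖) = scale ε :=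
    funext fun j => Real.norm_of_nonneg (scale_nonneg hε j)
  have hB (n : ℕ) : tabooExpect ε (fun j => ‖scale ε j‖) n ≤ 1 / 2 := by
    rw [hnorm]
    rcases n with _ | n
    · simp [tabooExpect]
    · have := two_mul_tabooExpect (isHarmonic_scale h2) n
      rw [scale_zero, scale_one, zero_mul, sub_zero] at this
      linarith
  have hlim := tendsto_tabooExpect_zero hε
    ((isLittleO_one_left_iff ℝ).2 (by simpa only [hnorm] using tendsto_scale_atTop h1 h2)) hB
  simpa using hasSum_firstReturn_of_isHarmonic hε (isHarmonic_const 1) one_ne_zero hlim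

theorem hasSum_firstReturn_of_lt (h1 : -1 < ε) (h2 : ε < -(1 / 2)) :
    HasSum (firstReturn ε) (1 / |ε| - 1) := by
  have hε : |ε| < 1 := abs_lt.2 ⟨h1, by linarith⟩
  have hε0 : ε ≠ 0 := by linarith
  have h12 : 1 + 2 * ε ≠ 0 := by linarith
  set S := ε / (1 + 2 * ε)
  have hS : S ≠ 0 := div_ne_zero hε0 h12
  have hφ : Tendsto (fun n => S - scale ε n) atTop (𝓝 0) := by
    simpa [S] using (tendsto_scale_of_lt h1 h2).const_sub S
  have hlim := tendsto_tabooExpect_zero hε (B := 1) (θ := fun _ => 1) ((isLittleO_one_iff ℝ).2 hφ)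
    (by simpa using tabooExpect_one_le hε)
  convert hasSum_firstReturn_of_isHarmonic hε ((isHarmonic_scale (by linarith)).const_sub S)
    (by simpa using hS) hlim using 1
  simp only [scale_zero, scale_one, sub_zero, abs_of_neg (by linarith : ε < 0), S]
  rw [div_sub_one h12, div_div_div_cancel_right₀ h12]
  field_simp
  ring

end Gillis

/-- The return probability `R = Σ_{n≥1} F_n` of the Gillis walk equals `1/|ε| − 1` for
`−1 < ε < −1/2` (transience) and equals `1` for `−1/2 ≤ ε < 1` (recurrence). -/
theorem gillis_return_probability (ε : ℝ) (hε : ε ∈ Set.Ioo (-1 : ℝ) 1)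
    (F : ℕ → ℝ) (hF0 : F 0 = 0)
    (hren : ∀ n : ℕ, 1 ≤ n → gP ε n 0 = ∑ k ∈ Finset.Icc 1 n, F k * gP ε (n - k) 0) :
    (ε < -(1 / 2) → HasSum F (1 / |ε| - 1)) ∧
    (-(1 / 2) ≤ ε → HasSum F 1) := by
  obtain rfl := Gillis.eq_firstReturn_of_renewal hF0 hren
  exact ⟨Gillis.hasSum_firstReturn_of_lt hε.1,
    fun h => Gillis.hasSum_firstReturn_of_neg_half_le h hε.2⟩
end

section
/- For every ε ∈ (−1, 1), the sequence a_j = j (1−ε)_{j−1} / (1+ε)_j (j ≥ 1) satisfies lim_{j→∞} j^{2ε} a_j = Γ(1+ε)/Γ(1−ε). Consequently, the stationary distribution of the Gillis random walk decays as π_j ∼ π_0 · (Γ(1+ε)/Γ(1−ε)) · j^{−2ε}, and it is normalizable precisely when 2ε > 1. -/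
/-!
Gauss's product `Real.GammaSeq x n = n^x n! / (x)_{n+1}` turns the ratio
`(1-ε)_{n+1} / (1+ε)_{n+1}` into `n^{-2ε} GammaSeq (1+ε) n / GammaSeq (1-ε) n`, and `a_{n+1}`
differs from that ratio only by the factor `(n+1)/(n+1-ε) → 1`; Gauss's limit formula for `Γ`
then gives the asymptotics. As `Γ(1+ε)/Γ(1-ε) ≠ 0`, `a_j` is summable exactly when the
`p`-series `∑ j^{-2ε}` is.
-/

open Filter

/-- Pochhammer symbol `(x)ₙ = x (x+1) ⋯ (x+n-1)`. -/
noncomputable def poch (x : ℝ) (n : ℕ) : ℝ := ∏ i ∈ Finset.range n, (x + i)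

/-- The radial profile of the candidate stationary distribution of the Gillis walk:
`a j = j (1−ε)_{j−1} / (1+ε)_j`. -/
noncomputable def gA (ε : ℝ) (j : ℕ) : ℝ :=
  (j : ℝ) * poch (1 - ε) (j - 1) / poch (1 + ε) j

open Topology Asymptotics

lemma poch_succ (x : ℝ) (n : ℕ) : poch x (n + 1) = poch x n * (x + n) :=
  Finset.prod_range_succ _ _

lemma Real.GammaSeq_div_GammaSeq (x y : ℝ) {n : ℕ} (hn : n ≠ 0) :
    Real.GammaSeq x n / Real.GammaSeq y n =
      (n : ℝ) ^ (x - y) * (poch y (n + 1) / poch x (n + 1)) := by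
  have hpos : (0 : ℝ) < n := by positivity
  simp only [Real.GammaSeq, ← poch.eq_def, Real.rpow_sub hpos]
  have : (n : ℝ) ^ y ≠ 0 := by positivity
  field_simp

lemma gA_succ (ε : ℝ) (n : ℕ) (h : 1 - ε + n ≠ 0) :
    gA ε (n + 1) = (n + 1) / (1 - ε + n) * (poch (1 - ε) (n + 1) / poch (1 + ε) (n + 1)) := by
  rw [gA, poch_succ (1 - ε), Nat.add_sub_cancel]
  push_cast
  field_simp

lemma summable_iff_of_tendsto_rpow_mul {u : ℕ → ℝ} {p c : ℝ} (hc : c ≠ 0)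
    (h : Tendsto (fun n : ℕ => (n : ℝ) ^ p * u n) atTop (𝓝 c)) : Summable u ↔ 1 < p := by
  have hequiv : u ~[atTop] fun n : ℕ => c * (n : ℝ) ^ (-p) := by
    refine (((isEquivalent_const_iff_tendsto hc).mpr h).mul IsEquivalent.refl).congr_left ?_
    filter_upwards [eventually_gt_atTop 0] with n hn
    rw [Pi.mul_apply, mul_comm, ← mul_assoc, ← Real.rpow_add (by positivity), neg_add_cancel,
      Real.rpow_zero, one_mul]
  rw [hequiv.summable_iff_nat, summable_mul_left_iff hc, Real.summable_nat_rpow, neg_lt_neg_iff]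

lemma tendsto_rpow_mul_gA {ε : ℝ} (hε : ε < 1) :
    Tendsto (fun j : ℕ => (j : ℝ) ^ (2 * ε) * gA ε j) atTop
      (𝓝 (Real.Gamma (1 + ε) / Real.Gamma (1 - ε))) := by
  rw [← tendsto_add_atTop_iff_nat 1]
  have hΓ : Real.Gamma (1 - ε) ≠ 0 := (Real.Gamma_pos_of_pos (by linarith)).ne'
  have hratio : Tendsto (fun n : ℕ => (n : ℝ) ^ (2 * ε) *
      (poch (1 - ε) (n + 1) / poch (1 + ε) (n + 1))) atTop
      (𝓝 (Real.Gamma (1 + ε) / Real.Gamma (1 - ε))) := by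
    refine ((Real.GammaSeq_tendsto_Gamma _).div (Real.GammaSeq_tendsto_Gamma _) hΓ).congr' ?_
    filter_upwards [eventually_ne_atTop 0] with n hn
    rw [Pi.div_apply, Real.GammaSeq_div_GammaSeq _ _ hn]
    ring_nf
  have hshift : Tendsto (fun n : ℕ => (((n : ℝ) + 1) / n) ^ (2 * ε)) atTop (𝓝 1) := by
    simpa using ((tendsto_natCast_div_add_atTop (1 : ℝ)).inv₀ one_ne_zero).rpow_const
      (p := 2 * ε) (.inl (by norm_num))
  have hfrac : Tendsto (fun n : ℕ => ((n : ℝ) + 1) / (1 - ε + n)) atTop (𝓝 1) := by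
    simpa [add_comm] using tendsto_add_mul_div_add_mul_atTop_nhds (1 : ℝ) (1 - ε) 1 one_ne_zero
  have hlim := (hshift.mul hfrac).mul hratio
  rw [one_mul, one_mul] at hlim
  refine hlim.congr' ?_
  filter_upwards [eventually_ne_atTop 0] with n hn
  have hpos : (0 : ℝ) < n := by positivity
  rw [gA_succ ε n (by positivity), Real.div_rpow (by positivity) hpos.le]
  push_cast
  field_simp

/-- For `ε ∈ (−1,1)`, `j^{2ε} a_j → Γ(1+ε)/Γ(1−ε)`, so the stationary distribution of the
Gillis walk decays as `π_j ∼ π_0 (Γ(1+ε)/Γ(1−ε)) j^{−2ε}`, and it is normalizable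
precisely when `2ε > 1`. -/
theorem gillis_stationary_tail (ε : ℝ) (hε : ε ∈ Set.Ioo (-1 : ℝ) 1) :
    Tendsto (fun j : ℕ => (j : ℝ) ^ (2 * ε) * gA ε j) atTop
      (nhds (Real.Gamma (1 + ε) / Real.Gamma (1 - ε))) ∧
    (Summable (gA ε) ↔ 1 < 2 * ε) := by
  have hlim := tendsto_rpow_mul_gA hε.2
  have hc : Real.Gamma (1 + ε) / Real.Gamma (1 - ε) ≠ 0 :=
    div_ne_zero (Real.Gamma_pos_of_pos (by linarith [hε.1])).ne'
      (Real.Gamma_pos_of_pos (by linarith [hε.2])).ne'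
  exact ⟨hlim, summable_iff_of_tendsto_rpow_mul hc hlim⟩
end

section
/- (Lamperti passage-time bound.) Let (X_n)_{n≥0} be a time-homogeneous Markov chain on [0,∞), and let μ_k(x) = E[(X_{n+1} − X_n)^k | X_n = x]. Suppose there exist ε̃ > 0 and A < ∞ such that for all x ≥ A the moment μ_2(x) exists and 2x μ_1(x) + μ_2(x) ≤ −ε̃. Let T = inf{n ≥ 0 : X_n ∈ [0, A]} be the first time the chain enters [0,A]. Then E[T] ≤ E[X_0²] / ε̃. -/
/-!
`V(x) = x²` is a Lyapunov function: the drift condition says that, while the chain stays above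
`A`, each step lowers `E[X_n²]` by at least `ε̃` on the event `{T > n}`. Writing
`a_n = E[X_n²; T > n]`, the Markov property gives `a_{n+1} + ε̃ P(T > n) ≤ a_n`, so telescoping
yields `ε̃ ∑ P(T > n) ≤ a_0 ≤ E[X_0²]`, and `∑ P(T > n) = E[T]`.
-/

open MeasureTheory ProbabilityTheory Filter Asymptotics
open scoped ENNReal

/-- The `k`-th moment of the increment of a Markov kernel at the point `x`:
`μ_k(x) = ∫ (y − x)^k κ(x, dy)`. -/
noncomputable def mom (κ : Kernel ℝ ℝ) (k : ℕ) (x : ℝ) : ℝ := ∫ y, (y - x) ^ k ∂(κ x)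

/-- `μ` is a trajectory (Ionescu–Tulcea) measure on path space `ℝ^ℕ` for the transition
kernel `κ`: for every `n`, conditionally on the first `n+1` coordinates, the `(n+1)`-st
coordinate is distributed according to `κ` applied to the `n`-th coordinate. -/
def IsMarkovTrajectory (κ : Kernel ℝ ℝ) (μ : Measure (ℕ → ℝ)) : Prop :=
  ∀ (n : ℕ) (s : Set ℝ), MeasurableSet s →
    ∀ t : Set (ℕ → ℝ),
      MeasurableSet[MeasurableSpace.comap (fun (ω : ℕ → ℝ) (i : Fin (n + 1)) => ω i)
        inferInstance] t →
      μ (t ∩ {ω | ω (n + 1) ∈ s}) = ∫⁻ ω in t, κ (ω n) s ∂μ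

lemma ENNReal.iInf_natCast_eq_tsum_ite (P : ℕ → Prop) [DecidablePred P] :
    (⨅ (n : ℕ) (_ : P n), (n : ℝ≥0∞)) = ∑' n : ℕ, if ∀ k ≤ n, ¬ P k then 1 else 0 := by
  by_cases h : ∃ n, P n
  · have hinf : (⨅ (n : ℕ) (_ : P n), (n : ℝ≥0∞)) = Nat.find h :=
      le_antisymm (iInf₂_le _ (Nat.find_spec h))
        (le_iInf₂ fun n hn => by exact_mod_cast Nat.find_min' h hn)
    simp_rw [hinf, ← Nat.lt_find_iff h]
    rw [tsum_eq_sum (s := Finset.range (Nat.find h)) fun n hn => by simp_all,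
      Finset.sum_ite_of_true fun n hn => Finset.mem_range.1 hn]
    simp
  · push Not at h
    simp [h]

lemma ENNReal.tsum_le_of_succ_add_le {a b : ℕ → ℝ≥0∞} (h : ∀ n, a (n + 1) + b n ≤ a n) :
    ∑' n, b n ≤ a 0 := by
  have hsum : ∀ N, a N + ∑ n ∈ Finset.range N, b n ≤ a 0 := by
    intro N
    induction N with
    | zero => simp
    | succ N ih =>
      calc a (N + 1) + ∑ n ∈ Finset.range (N + 1), b n
          = a (N + 1) + b N + ∑ n ∈ Finset.range N, b n := by
            rw [Finset.sum_range_succ, add_comm _ (b N), add_assoc]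
        _ ≤ a 0 := (add_le_add_left (h N) _).trans ih
  exact ENNReal.tsum_le_of_sum_range_le fun N => le_add_self.trans (hsum N)

lemma integral_sq_eq_add_mom (κ : Kernel ℝ ℝ) [IsMarkovKernel κ] {x : ℝ}
    (h1 : Integrable (fun y => y - x) (κ x)) (h2 : Integrable (fun y => (y - x) ^ 2) (κ x)) :
    Integrable (fun y => y ^ 2) (κ x) ∧
      ∫ y, y ^ 2 ∂(κ x) = x ^ 2 + 2 * x * mom κ 1 x + mom κ 2 x := by
  have hexpand : (fun y : ℝ => y ^ 2) = fun y => (x ^ 2 + 2 * x * (y - x)) + (y - x) ^ 2 := by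
    funext y; ring
  have hlin : Integrable (fun y : ℝ => x ^ 2 + 2 * x * (y - x)) (κ x) :=
    (integrable_const _).add (h1.const_mul _)
  rw [hexpand]
  refine ⟨hlin.add h2, ?_⟩
  rw [integral_add hlin h2, integral_add (integrable_const _) (h1.const_mul _), integral_const,
    integral_const_mul]
  simp [mom]

lemma lintegral_sq_add_le_of_drift (κ : Kernel ℝ ℝ) [IsMarkovKernel κ] {eps x : ℝ}
    (heps : 0 ≤ eps) (h1 : Integrable (fun y => y - x) (κ x))
    (h2 : Integrable (fun y => (y - x) ^ 2) (κ x))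
    (hdrift : 2 * x * mom κ 1 x + mom κ 2 x ≤ -eps) :
    ∫⁻ y, ENNReal.ofReal (y ^ 2) ∂(κ x) + ENNReal.ofReal eps ≤ ENNReal.ofReal (x ^ 2) := by
  obtain ⟨hint, heq⟩ := integral_sq_eq_add_mom κ h1 h2
  rw [← ofReal_integral_eq_lintegral_ofReal hint (.of_forall fun y => sq_nonneg y),
    ← ENNReal.ofReal_add (integral_nonneg fun y => sq_nonneg y) heps]
  exact ENNReal.ofReal_le_ofReal (by linarith)

lemma IsMarkovTrajectory.setLIntegral_comp_succ {κ : Kernel ℝ ℝ} {μ : Measure (ℕ → ℝ)}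
    (htraj : IsMarkovTrajectory κ μ) {n : ℕ} {t : Set (ℕ → ℝ)}
    (ht : MeasurableSet[MeasurableSpace.comap (fun (ω : ℕ → ℝ) (i : Fin (n + 1)) => ω i)
      inferInstance] t)
    {g : ℝ → ℝ≥0∞} (hg : Measurable g) :
    ∫⁻ ω in t, g (ω (n + 1)) ∂μ = ∫⁻ ω in t, ∫⁻ y, g y ∂(κ (ω n)) ∂μ := by
  have hker : Measurable fun ω : ℕ → ℝ => κ (ω n) := κ.measurable.comp (measurable_pi_apply n)
  have hmap :
      (μ.restrict t).map (fun ω => ω (n + 1)) = (μ.restrict t).bind (fun ω => κ (ω n)) := by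
    ext s hs
    rw [Measure.map_apply (measurable_pi_apply (n + 1)) hs,
      Measure.bind_apply hs hker.aemeasurable,
      Measure.restrict_apply (measurable_pi_apply (n + 1) hs), Set.inter_comm]
    exact htraj n s hs t ht
  rw [← lintegral_map hg (measurable_pi_apply _), hmap,
    Measure.lintegral_bind hker.aemeasurable hg.aemeasurable]

/-- The event `{T > n}`. -/
def survivalSet (A : ℝ) (n : ℕ) : Set (ℕ → ℝ) := {ω | ∀ k ≤ n, A < ω k}

lemma survivalSet_succ_subset (A : ℝ) (n : ℕ) : survivalSet A (n + 1) ⊆ survivalSet A n :=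
  fun _ hω k hk => hω k (hk.trans n.le_succ)

lemma measurableSet_comap_survivalSet (A : ℝ) (n : ℕ) :
    MeasurableSet[MeasurableSpace.comap (fun (ω : ℕ → ℝ) (i : Fin (n + 1)) => ω i)
      inferInstance] (survivalSet A n) := by
  refine ⟨⋂ i, {v : Fin (n + 1) → ℝ | A < v i},
    .iInter fun i => measurableSet_lt measurable_const (measurable_pi_apply i), ?_⟩
  ext ω
  simp only [Set.preimage_iInter, Set.mem_iInter, Set.mem_preimage, Set.mem_ofPred_eq]
  exact ⟨fun h k hk => h ⟨k, Nat.lt_succ_of_le hk⟩, fun h i => h i (Nat.lt_succ_iff.1 i.2)⟩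

lemma measurableSet_survivalSet (A : ℝ) (n : ℕ) : MeasurableSet (survivalSet A n) :=
  (measurable_pi_lambda _ fun _ => measurable_pi_apply _).comap_le _
    (measurableSet_comap_survivalSet A n)

lemma lintegral_passage_time_eq_tsum (μ : Measure (ℕ → ℝ)) (A : ℝ) :
    ∫⁻ ω, (⨅ (n : ℕ) (_ : ω n ≤ A), (n : ℝ≥0∞)) ∂μ = ∑' n, μ (survivalSet A n) := by
  have hind : ∀ ω : ℕ → ℝ, (⨅ (n : ℕ) (_ : ω n ≤ A), (n : ℝ≥0∞))
      = ∑' n, (survivalSet A n).indicator 1 ω := by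
    intro ω
    rw [ENNReal.iInf_natCast_eq_tsum_ite]
    congr 1 with n
    simp only [survivalSet, Set.indicator, Set.mem_ofPred_eq, not_le, Pi.one_apply]
    congr
  simp_rw [hind]
  rw [lintegral_tsum fun n =>
    (measurable_one.indicator (measurableSet_survivalSet A n)).aemeasurable]
  simp_rw [lintegral_indicator_one (measurableSet_survivalSet A _)]

lemma setLIntegral_sq_succ_add_le (κ : Kernel ℝ ℝ) [IsMarkovKernel κ] (μ : Measure (ℕ → ℝ))
    (htraj : IsMarkovTrajectory κ μ) {eps A : ℝ} (heps : 0 ≤ eps)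
    (hint : ∀ x : ℝ, A ≤ x → Integrable (fun y => y - x) (κ x) ∧
      Integrable (fun y => (y - x) ^ 2) (κ x))
    (hdrift : ∀ x : ℝ, A ≤ x → 2 * x * mom κ 1 x + mom κ 2 x ≤ -eps) (n : ℕ) :
    ∫⁻ ω in survivalSet A (n + 1), ENNReal.ofReal (ω (n + 1) ^ 2) ∂μ
        + ENNReal.ofReal eps * μ (survivalSet A n) ≤
      ∫⁻ ω in survivalSet A n, ENNReal.ofReal (ω n ^ 2) ∂μ := by
  have hmarkov := htraj.setLIntegral_comp_succ (measurableSet_comap_survivalSet A n)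
    (g := fun y => ENNReal.ofReal (y ^ 2)) (by fun_prop)
  calc ∫⁻ ω in survivalSet A (n + 1), ENNReal.ofReal (ω (n + 1) ^ 2) ∂μ
        + ENNReal.ofReal eps * μ (survivalSet A n)
      ≤ ∫⁻ ω in survivalSet A n, ∫⁻ y, ENNReal.ofReal (y ^ 2) ∂(κ (ω n)) ∂μ
        + ∫⁻ _ in survivalSet A n, ENNReal.ofReal eps ∂μ := by
        rw [setLIntegral_const, mul_comm, ← hmarkov]
        gcongr
        exact survivalSet_succ_subset A n
    _ = ∫⁻ ω in survivalSet A n,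
          (∫⁻ y, ENNReal.ofReal (y ^ 2) ∂(κ (ω n)) + ENNReal.ofReal eps) ∂μ :=
        (lintegral_add_right _ measurable_const).symm
    _ ≤ ∫⁻ ω in survivalSet A n, ENNReal.ofReal (ω n ^ 2) ∂μ := by
        refine setLIntegral_mono' (measurableSet_survivalSet A n) fun ω hω => ?_
        have hA : A ≤ ω n := (hω n le_rfl).le
        exact lintegral_sq_add_le_of_drift κ heps (hint _ hA).1 (hint _ hA).2 (hdrift _ hA)

theorem lamperti_passage_time_bound_general
    (κ : Kernel ℝ ℝ) [IsMarkovKernel κ]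
    (μ : Measure (ℕ → ℝ))
    (htraj : IsMarkovTrajectory κ μ)
    (eps A : ℝ) (heps : 0 < eps)
    (hint : ∀ x : ℝ, A ≤ x → Integrable (fun y => y - x) (κ x) ∧
      Integrable (fun y => (y - x) ^ 2) (κ x))
    (hdrift : ∀ x : ℝ, A ≤ x → 2 * x * mom κ 1 x + mom κ 2 x ≤ -eps) :
    ∫⁻ ω, (⨅ (n : ℕ) (_ : ω n ≤ A), (n : ℝ≥0∞)) ∂μ ≤
      (∫⁻ ω, ENNReal.ofReal ((ω 0) ^ 2) ∂μ) / ENNReal.ofReal eps := by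
  have htelescope : ENNReal.ofReal eps * ∑' n, μ (survivalSet A n) ≤
      ∫⁻ ω in survivalSet A 0, ENNReal.ofReal (ω 0 ^ 2) ∂μ := by
    rw [← ENNReal.tsum_mul_left]
    exact ENNReal.tsum_le_of_succ_add_le
      (setLIntegral_sq_succ_add_le κ μ htraj heps.le hint hdrift)
  rw [lintegral_passage_time_eq_tsum, ENNReal.le_div_iff_mul_le
    (.inl (ENNReal.ofReal_pos.2 heps).ne') (.inl ENNReal.ofReal_ne_top), mul_comm]
  exact htelescope.trans (setLIntegral_le_lintegral _ _)

/-- **Lamperti passage-time bound.** If `2x μ₁(x) + μ₂(x) ≤ −ε̃` for all `x ≥ A`, then the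
first entrance time `T` of the chain into `[0, A]` satisfies `E[T] ≤ E[X₀²]/ε̃`. -/
theorem lamperti_passage_time_bound
    (κ : Kernel ℝ ℝ) [IsMarkovKernel κ]
    (μ : Measure (ℕ → ℝ)) [IsProbabilityMeasure μ]
    (htraj : IsMarkovTrajectory κ μ)
    (hstate : ∀ n : ℕ, ∀ᵐ ω ∂μ, 0 ≤ ω n)
    (eps A : ℝ) (heps : 0 < eps)
    (hint : ∀ x : ℝ, A ≤ x → Integrable (fun y => y - x) (κ x) ∧
      Integrable (fun y => (y - x) ^ 2) (κ x))
    (hdrift : ∀ x : ℝ, A ≤ x → 2 * x * mom κ 1 x + mom κ 2 x ≤ -eps) :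
    ∫⁻ ω, (⨅ (n : ℕ) (_ : ω n ≤ A), (n : ℝ≥0∞)) ∂μ ≤
      (∫⁻ ω, ENNReal.ofReal ((ω 0) ^ 2) ∂μ) / ENNReal.ofReal eps :=
  lamperti_passage_time_bound_general κ μ htraj eps A heps hint hdrift
end
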